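/- arXiv:math/9902089 — 4 statements merged into one kernel-verified Lean document; each statement's English description precedes it below -/
import Mathlib

section
/- Let W₁, …, W_k be subgroups of S_d with left transversals I₁, …, I_k, and let S_d act diagonally on I = I₁ × ⋯ × I_k via the induced maps s_m. Let the group G = S_d × W₁ᵒᵖ × ⋯ × W_kᵒᵖ act on (S_d)^k by (ζ, w₁, …, w_k)·(a₁, …, a_k) = (ζ a₁ w₁, …, ζ a_k w_k). Then there is a canonical bijection between the orbit space S_d \ I and the orbit space of G acting on (S_d)^k. -/
def IsLeftTransversal {G : Type*} [Group G] (W : Subgroup G) (I : Set G) : Prop :=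
  ∀ g : G, ∃! i : I, (i : G)⁻¹ * g ∈ W

/-- canonical bijection between the orbit space of the diagonal action of
`S_d` on `I₁ × ⋯ × I_k` and the orbit space of `S_d × W₁ᵒᵖ × ⋯ × W_kᵒᵖ` acting on
`(S_d)^k` by `(ζ,w₁,…,w_k)·(a₁,…,a_k) = (ζa₁w₁,…,ζa_kw_k)`. -/
theorem stmt4 (d k : ℕ) (W : Fin k → Subgroup (Equiv.Perm (Fin d)))
    (I : Fin k → Set (Equiv.Perm (Fin d)))
    (hI : ∀ m, IsLeftTransversal (W m) (I m))
    (s : ∀ m, Equiv.Perm (Fin d) →* Equiv.Perm (I m))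
    (hs : ∀ m (ζ : Equiv.Perm (Fin d)) (i : I m),
      ((s m ζ i : Equiv.Perm (Fin d)))⁻¹ * ζ * i ∈ W m) :
    Nonempty
      (Quot (fun i j : ∀ m, I m => ∃ ζ : Equiv.Perm (Fin d), ∀ m, s m ζ (i m) = j m) ≃
       Quot (fun a b : Fin k → Equiv.Perm (Fin d) =>
         ∃ (ζ : Equiv.Perm (Fin d)) (w : ∀ m, W m),
           ∀ m, b m = ζ * a m * (w m : Equiv.Perm (Fin d)))) := by
  classical
  let P := Equiv.Perm (Fin d)
  let R1 : (∀ m, I m) → (∀ m, I m) → Prop :=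
    fun i j => ∃ ζ : P, ∀ m, s m ζ (i m) = j m
  let R2 : (Fin k → P) → (Fin k → P) → Prop :=
    fun a b => ∃ (ζ : P) (w : ∀ m, W m), ∀ m, b m = ζ * a m * (w m : P)
  choose rep hrep huniq using fun m (g : P) => hI m g
  -- forward map
  have fwd : ∀ i j : ∀ m, I m, R1 i j →
      Quot.mk R2 (fun m => (i m : P)) = Quot.mk R2 (fun m => (j m : P)) := by
    rintro i j ⟨ζ, h⟩
    apply Quot.sound
    refine ⟨ζ, fun m => ⟨(((j m : P))⁻¹ * ζ * (i m : P))⁻¹, ?_⟩, fun m => ?_⟩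
    · exact (W m).inv_mem (by rw [← h m]; exact hs m ζ (i m))
    · simp only []
      group
  have bwd : ∀ a b : Fin k → P, R2 a b →
      Quot.mk R1 (fun m => rep m (a m)) = Quot.mk R1 (fun m => rep m (b m)) := by
    rintro a b ⟨ζ, w, h⟩
    apply Quot.sound
    refine ⟨ζ, fun m => ?_⟩
    apply huniq m (b m)
    have h1 : ((s m ζ (rep m (a m)) : P))⁻¹ * ζ * (rep m (a m) : P) ∈ W m :=
      hs m ζ (rep m (a m))
    have h2 : ((rep m (a m) : P))⁻¹ * a m ∈ W m := hrep m (a m)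
    have key : ((s m ζ (rep m (a m)) : P))⁻¹ * b m =
        (((s m ζ (rep m (a m)) : P))⁻¹ * ζ * (rep m (a m) : P)) *
        (((rep m (a m) : P))⁻¹ * a m) * (w m : P) := by
      rw [h m]; group
    rw [key]
    exact (W m).mul_mem ((W m).mul_mem h1 h2) (w m).2
  refine ⟨{
    toFun := Quot.lift (fun i => Quot.mk R2 (fun m => (i m : P))) fwd
    invFun := Quot.lift (fun a => Quot.mk R1 (fun m => rep m (a m))) bwd
    left_inv := ?_
    right_inv := ?_ }⟩
  · apply Quot.ind
    intro i
    simp only [Quot.lift_mk]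
    congr 1
    funext m
    exact (huniq m (i m : P) (i m) (by simpa using (W m).one_mem)).symm
  · apply Quot.ind
    intro a
    simp only [Quot.lift_mk]
    apply Quot.sound
    refine ⟨1, fun m => ⟨((rep m (a m) : P))⁻¹ * a m, hrep m (a m)⟩, fun m => ?_⟩
    simp only []
    group
end

section
/- With notation as in the decomposition theorem, the internal product of generalized cycle indices satisfies Z(χ₁;p₁,…,p_d) ∗ ⋯ ∗ Z(χ_k;p₁,…,p_d) = Σ_{(ω₁,…,ω_k) ∈ T(W₁,…,W_k)} Z(ψ_{(ω₁,…,ω_k)}; p₁,…,p_d), where T(W₁,…,W_k) is a set of representatives of the S_d-orbits on I₁×⋯×I_k, ψ_ω is the character ζ ↦ ∏_m χ_m((s_m(ζ)(ω_m))⁻¹ζω_m) on the stabilizer H_ω = ∩_m ω_mW_mω_m⁻¹. -/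
open scoped Classical
open MvPolynomial

/-- The number `c_s(σ)` of cycles of length `s` in the cycle decomposition of `σ`
(fixed points counted as cycles of length 1). -/
def cyc {d : ℕ} (σ : Equiv.Perm (Fin d)) (s : ℕ) : ℕ :=
  if s = 1 then d - σ.support.card else σ.cycleType.count s

/-- The monomial `p₁^{c₁(σ)} ⋯ p_d^{c_d(σ)}`, where the variable `X s` stands for the
power sum `p_{s+1}`. -/
noncomputable def cycMon {d : ℕ} (K : Type*) [Field K] (σ : Equiv.Perm (Fin d)) :
    MvPolynomial (Fin d) K :=
  ∏ s : Fin d, (X s : MvPolynomial (Fin d) K) ^ cyc σ ((s : ℕ) + 1)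

/-- The characteristic map: `ch u = |S_d|⁻¹ Σ_ζ u(ζ) p₁^{c₁(ζ)}⋯p_d^{c_d(ζ)}`. -/
noncomputable def ch {d : ℕ} (K : Type*) [Field K] (u : Equiv.Perm (Fin d) → K) :
    MvPolynomial (Fin d) K :=
  (Nat.card (Equiv.Perm (Fin d)) : K)⁻¹ • ∑ ζ : Equiv.Perm (Fin d), u ζ • cycMon K ζ

/-- The character of the induced representation `ind_W^{S_d}(χ)`. -/
noncomputable def indChar {d : ℕ} (K : Type*) [Field K]
    (W : Subgroup (Equiv.Perm (Fin d))) (χ : W →* Kˣ) : Equiv.Perm (Fin d) → K :=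
  fun ζ => (Nat.card W : K)⁻¹ * ∑ g : Equiv.Perm (Fin d),
    if h : g⁻¹ * ζ * g ∈ W then (χ ⟨g⁻¹ * ζ * g, h⟩ : K) else 0

/-- The generalized cycle index `Z(χ; p₁,…,p_d)`; it equals `ch (indChar χ)`. -/
noncomputable def Zind {d : ℕ} (K : Type*) [Field K]
    (W : Subgroup (Equiv.Perm (Fin d))) (χ : W →* Kˣ) : MvPolynomial (Fin d) K :=
  (Nat.card W : K)⁻¹ • ∑ σ : W, (χ σ : K) • cycMon K (σ : Equiv.Perm (Fin d))

/-- `z_σ = ∏_{s=1}^d s^{c_s(σ)} c_s(σ)!`. -/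
def zval {d : ℕ} (σ : Equiv.Perm (Fin d)) : ℕ :=
  ∏ s ∈ Finset.Icc 1 d, s ^ (cyc σ s) * (cyc σ s).factorial

/-! ### Auxiliary lemmas -/

lemma cyc_conj {d : ℕ} (η σ : Equiv.Perm (Fin d)) (t : ℕ) :
    cyc (η * σ * η⁻¹) t = cyc σ t := by
  have h : (η * σ * η⁻¹).support.card = σ.support.card := by
    rw [← Equiv.Perm.sum_cycleType, ← Equiv.Perm.sum_cycleType, Equiv.Perm.cycleType_conj]
  unfold cyc
  rw [h, Equiv.Perm.cycleType_conj]

lemma cycMon_conj {d : ℕ} (K : Type*) [Field K] (η σ : Equiv.Perm (Fin d)) :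
    cycMon K (η * σ * η⁻¹) = cycMon K σ := by
  unfold cycMon; simp only [cyc_conj]

lemma chi_conj' {G : Type*} [Group G] {K : Type*} [Field K] (W : Subgroup G)
    (χ : W →* Kˣ) (u v : W) : χ (u * v * u⁻¹) = χ v := by
  rw [map_mul, map_mul, map_inv, mul_comm (χ u) (χ v), mul_assoc, mul_inv_cancel, mul_one]

lemma prod_ite_all {ι K : Type*} [Fintype ι] [Field K] (P : ι → Prop)
    [∀ i, Decidable (P i)] [Decidable (∀ i, P i)] (f : ι → K) :
    (∏ i, if P i then f i else 0) = if ∀ i, P i then ∏ i, f i else 0 := by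
  by_cases h : ∀ i, P i
  · rw [if_pos h]; exact Finset.prod_congr rfl fun i _ => if_pos (h i)
  · rw [if_neg h]
    push_neg at h
    obtain ⟨i, hi⟩ := h
    exact Finset.prod_eq_zero (Finset.mem_univ i) (if_neg hi)

section SingleGroup
variable {d : ℕ} {K : Type*} [Field K]
variable (W : Subgroup (Equiv.Perm (Fin d))) (I : Set (Equiv.Perm (Fin d)))
  (hI : IsLeftTransversal W I) (s : Equiv.Perm (Fin d) →* Equiv.Perm I)
  (hs : ∀ (ζ : Equiv.Perm (Fin d)) (i : I), ((s ζ i : Equiv.Perm (Fin d)))⁻¹ * ζ * i ∈ W)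

include hI hs in
lemma s_eq_iff (ζ : Equiv.Perm (Fin d)) (i j : I) :
    s ζ i = j ↔ (j : Equiv.Perm (Fin d))⁻¹ * ζ * i ∈ W := by
  obtain ⟨u, hu, huniq⟩ := hI (ζ * (i : Equiv.Perm (Fin d)))
  constructor
  · rintro rfl; exact hs ζ i
  · intro hj
    have h1 : s ζ i = u := huniq _ (by simpa [mul_assoc] using hs ζ i)
    have h2 : j = u := huniq _ (by simpa [mul_assoc] using hj)
    rw [h1, h2]

include hI hs in
lemma indChar_eq_transversal [CharZero K] (χ : W →* Kˣ) (ζ : Equiv.Perm (Fin d)) :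
    indChar K W χ ζ
      = ∑ i : I, if s ζ i = i
          then (χ ⟨((s ζ i : Equiv.Perm (Fin d)))⁻¹ * ζ * i, hs ζ i⟩ : K) else 0 := by
  have hbij : Function.Bijective
      (fun p : I × W => ((p.1 : Equiv.Perm (Fin d)) * (p.2 : Equiv.Perm (Fin d)))) := by
    constructor
    · rintro ⟨i, w⟩ ⟨i', w'⟩ h
      simp only at h
      obtain ⟨u, hu, huniq⟩ := hI ((i : Equiv.Perm (Fin d)) * (w : Equiv.Perm (Fin d)))
      have h1 : i = u := huniq _ (by simpa [inv_mul_cancel_left] using w.2)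
      have h2 : i' = u := huniq i' (by
        show (i' : Equiv.Perm (Fin d))⁻¹ * ((i : Equiv.Perm (Fin d)) * w) ∈ W
        rw [h]; simpa [inv_mul_cancel_left] using w'.2)
      have hii : i = i' := h1.trans h2.symm
      subst hii
      exact Prod.ext rfl (Subtype.ext (mul_left_cancel h))
    · intro g
      obtain ⟨i, hi, -⟩ := hI g
      exact ⟨(i, ⟨(i : Equiv.Perm (Fin d))⁻¹ * g, hi⟩), by simp [mul_inv_cancel_left]⟩
  have hsum : (∑ g : Equiv.Perm (Fin d),
        if h : g⁻¹ * ζ * g ∈ W then (χ ⟨g⁻¹ * ζ * g, h⟩ : K) else 0)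
      = ∑ p : I × W,
        if h : ((p.1 : Equiv.Perm (Fin d)) * p.2)⁻¹ * ζ * ((p.1 : Equiv.Perm (Fin d)) * p.2) ∈ W
          then (χ ⟨_, h⟩ : K) else 0 :=
    (Fintype.sum_bijective _ hbij _ _ (fun p => rfl)).symm
  have hterm : ∀ (i : I) (w : W),
      (if h : ((i : Equiv.Perm (Fin d)) * w)⁻¹ * ζ * ((i : Equiv.Perm (Fin d)) * w) ∈ W
          then (χ ⟨_, h⟩ : K) else 0)
        = (if s ζ i = i
            then (χ ⟨((s ζ i : Equiv.Perm (Fin d)))⁻¹ * ζ * i, hs ζ i⟩ : K) else 0) := by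
    intro i w
    by_cases hc : (i : Equiv.Perm (Fin d))⁻¹ * ζ * (i : Equiv.Perm (Fin d)) ∈ W
    · have hfix : s ζ i = i := (s_eq_iff W I hI s hs ζ i i).mpr hc
      have hmem : ((i : Equiv.Perm (Fin d)) * w)⁻¹ * ζ * ((i : Equiv.Perm (Fin d)) * w) ∈ W := by
        have : ((i : Equiv.Perm (Fin d)) * w)⁻¹ * ζ * ((i : Equiv.Perm (Fin d)) * w)
            = (w : Equiv.Perm (Fin d))⁻¹ * ((i : Equiv.Perm (Fin d))⁻¹ * ζ * i) * w := by group
        rw [this]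
        exact W.mul_mem (W.mul_mem (W.inv_mem w.2) hc) w.2
      rw [dif_pos hmem, if_pos hfix]
      have he1 : (⟨((i : Equiv.Perm (Fin d)) * w)⁻¹ * ζ * ((i : Equiv.Perm (Fin d)) * w), hmem⟩ : W)
          = w⁻¹ * ⟨(i : Equiv.Perm (Fin d))⁻¹ * ζ * i, hc⟩ * (w⁻¹)⁻¹ := by
        apply Subtype.ext
        show _ = (w : Equiv.Perm (Fin d))⁻¹ * _ * ((w : Equiv.Perm (Fin d))⁻¹)⁻¹
        group
      have he2 : (⟨((s ζ i : Equiv.Perm (Fin d)))⁻¹ * ζ * i, hs ζ i⟩ : W)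
          = ⟨(i : Equiv.Perm (Fin d))⁻¹ * ζ * i, hc⟩ := by
        apply Subtype.ext
        show ((s ζ i : Equiv.Perm (Fin d)))⁻¹ * ζ * i = _
        rw [hfix]
      rw [he1, he2, chi_conj']
    · have hfix : ¬ s ζ i = i := fun h => hc ((s_eq_iff W I hI s hs ζ i i).mp h)
      have hmem : ¬ ((i : Equiv.Perm (Fin d)) * w)⁻¹ * ζ * ((i : Equiv.Perm (Fin d)) * w) ∈ W := by
        intro h
        apply hc
        have : (i : Equiv.Perm (Fin d))⁻¹ * ζ * i
            = (w : Equiv.Perm (Fin d))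
                * (((i : Equiv.Perm (Fin d)) * w)⁻¹ * ζ * ((i : Equiv.Perm (Fin d)) * w))
                * (w : Equiv.Perm (Fin d))⁻¹ := by group
        rw [this]
        exact W.mul_mem (W.mul_mem w.2 h) (W.inv_mem w.2)
      rw [dif_neg hmem, if_neg hfix]
  have hinner : ∀ i : I, (∑ w : W,
      if h : ((i : Equiv.Perm (Fin d)) * w)⁻¹ * ζ * ((i : Equiv.Perm (Fin d)) * w) ∈ W
        then (χ ⟨_, h⟩ : K) else 0)
      = (Nat.card W : K) * (if s ζ i = i
          then (χ ⟨((s ζ i : Equiv.Perm (Fin d)))⁻¹ * ζ * i, hs ζ i⟩ : K) else 0) := by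
    intro i
    rw [Finset.sum_congr rfl fun w _ => hterm i w, Finset.sum_const, nsmul_eq_mul,
      Nat.card_eq_fintype_card, Finset.card_univ]
  show (Nat.card W : K)⁻¹ * _ = _
  rw [hsum, Fintype.sum_prod_type, Finset.sum_congr rfl fun i _ => hinner i, ← Finset.mul_sum,
    ← mul_assoc, inv_mul_cancel₀, one_mul]
  exact Nat.cast_ne_zero.mpr (Nat.card_pos (α := W)).ne'
end SingleGroup

section ManyGroups
variable {d k : ℕ} (K : Type*) [Field K]
variable (W : Fin k → Subgroup (Equiv.Perm (Fin d))) (χ : ∀ m, W m →* Kˣ)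
  (I : Fin k → Set (Equiv.Perm (Fin d)))
  (s : ∀ m, Equiv.Perm (Fin d) →* Equiv.Perm (I m))
  (hs : ∀ m (ζ : Equiv.Perm (Fin d)) (i : I m),
    ((s m ζ i : Equiv.Perm (Fin d)))⁻¹ * ζ * i ∈ W m)

noncomputable def Aaux (ω : ∀ m, I m) : MvPolynomial (Fin d) K :=
  ∑ ζ : Equiv.Perm (Fin d),
    if (∀ m, s m ζ (ω m) = ω m) then
      (∏ m, (χ m ⟨((s m ζ (ω m) : Equiv.Perm (Fin d)))⁻¹ * ζ * (ω m), hs m ζ (ω m)⟩ : K))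
        • cycMon K ζ
    else 0

lemma Aaux_conj (η : Equiv.Perm (Fin d)) (ω : ∀ m, I m) :
    Aaux K W χ I s hs (fun m => s m η (ω m)) = Aaux K W χ I s hs ω := by
  unfold Aaux
  apply Fintype.sum_equiv (MulAut.conj η⁻¹).toEquiv
  intro ζ
  set ξ := (MulAut.conj η⁻¹).toEquiv ζ with hξdef
  have hζ : ζ = η * ξ * η⁻¹ := by
    rw [hξdef]; simp [MulAut.conj_apply]; group
  have hkey : ∀ m (x : I m), s m ζ (s m η x) = s m η (s m ξ x) := by
    intro m x
    have hmul : ζ * η = η * ξ := by rw [hζ]; group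
    calc s m ζ (s m η x) = s m (ζ * η) x := by rw [map_mul]; rfl
      _ = s m (η * ξ) x := by rw [hmul]
      _ = s m η (s m ξ x) := by rw [map_mul]; rfl
  have hcond : (∀ m, s m ζ (s m η (ω m)) = s m η (ω m)) ↔ (∀ m, s m ξ (ω m) = ω m) := by
    constructor <;> intro h m
    · have h' := h m
      rw [hkey] at h'
      exact (s m η).injective h'
    · rw [hkey, h m]
  by_cases hc : ∀ m, s m ξ (ω m) = ω m
  · rw [if_pos (hcond.mpr hc), if_pos hc]
    have hcyc : cycMon K ζ = cycMon K ξ := by rw [hζ, cycMon_conj]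
    rw [hcyc]
    congr 1
    apply Finset.prod_congr rfl
    intro m _
    have h1 : s m ζ (s m η (ω m)) = s m η (ω m) := hcond.mpr hc m
    have h2 : s m ξ (ω m) = ω m := hc m
    have he : (⟨((s m ζ (s m η (ω m)) : Equiv.Perm (Fin d)))⁻¹ * ζ * (s m η (ω m)),
          hs m ζ (s m η (ω m))⟩ : W m)
        = ⟨((s m η (ω m) : Equiv.Perm (Fin d)))⁻¹ * η * (ω m), hs m η (ω m)⟩
          * ⟨((s m ξ (ω m) : Equiv.Perm (Fin d)))⁻¹ * ξ * (ω m), hs m ξ (ω m)⟩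
          * (⟨((s m η (ω m) : Equiv.Perm (Fin d)))⁻¹ * η * (ω m), hs m η (ω m)⟩ : W m)⁻¹ := by
      apply Subtype.ext
      simp only [Subgroup.coe_mul, InvMemClass.coe_inv]
      rw [h1, h2, hζ]
      group
    rw [he, chi_conj']
  · rw [if_neg (fun h => hc (hcond.mp h)), if_neg hc]
end ManyGroups


def tupAction {d k : ℕ} (I : Fin k → Set (Equiv.Perm (Fin d)))
    (s : ∀ m, Equiv.Perm (Fin d) →* Equiv.Perm (I m)) :
    MulAction (Equiv.Perm (Fin d)) (∀ m, I m) where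
  smul η i := fun m => s m η (i m)
  one_smul i := funext fun m => by
    show s m 1 (i m) = i m
    rw [map_one]; rfl
  mul_smul η θ i := funext fun m => by
    show s m (η * θ) (i m) = s m η (s m θ (i m))
    rw [map_mul]; rfl

set_option synthInstance.maxHeartbeats 1000000 in
set_option maxHeartbeats 1000000 in
lemma orbit_count {d k : ℕ} (I : Fin k → Set (Equiv.Perm (Fin d)))
    (s : ∀ m, Equiv.Perm (Fin d) →* Equiv.Perm (I m)) (ω : ∀ m, I m) :
    (Finset.univ.filter (fun i : ∀ m, I m => ∃ ζ, ∀ m', s m' ζ (ω m') = i m')).card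
      * Nat.card {η : Equiv.Perm (Fin d) // ∀ m, s m η (ω m) = ω m}
      = Nat.card (Equiv.Perm (Fin d)) := by
  classical
  letI act := tupAction I s
  have hsmul : ∀ (η : Equiv.Perm (Fin d)) (i : ∀ m, I m),
      η • i = fun m => s m η (i m) := fun _ _ => rfl
  haveI : Fintype (MulAction.orbit (Equiv.Perm (Fin d)) ω) := Fintype.ofFinite _
  haveI : Fintype (MulAction.stabilizer (Equiv.Perm (Fin d)) ω) := Fintype.ofFinite _
  have h := MulAction.card_orbit_mul_card_stabilizer_eq_card_group (Equiv.Perm (Fin d)) ω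
  have h1 : (Finset.univ.filter
        (fun i : ∀ m, I m => ∃ ζ, ∀ m', s m' ζ (ω m') = i m')).card
      = Fintype.card (MulAction.orbit (Equiv.Perm (Fin d)) ω) := by
    rw [← Set.toFinset_card]
    congr 1
    ext i
    simp only [Set.mem_toFinset, Finset.mem_filter, Finset.mem_univ, true_and]
    rw [MulAction.mem_orbit_iff]
    constructor
    · rintro ⟨ζ, hζ⟩
      exact ⟨ζ, by rw [hsmul]; exact funext fun m => hζ m⟩
    · rintro ⟨ζ, hζ⟩
      rw [hsmul] at hζ
      exact ⟨ζ, fun m => congrFun hζ m⟩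
  have h2 : Nat.card {η : Equiv.Perm (Fin d) // ∀ m, s m η (ω m) = ω m}
      = Fintype.card (MulAction.stabilizer (Equiv.Perm (Fin d)) ω) := by
    rw [← Nat.card_eq_fintype_card]
    apply Nat.card_congr
    apply Equiv.subtypeEquivRight
    intro η
    rw [MulAction.mem_stabilizer_iff, hsmul]
    constructor
    · intro hη; exact funext fun m => hη m
    · intro hη m; exact congrFun hη m
  rw [h1, h2, h, Nat.card_eq_fintype_card]

set_option synthInstance.maxHeartbeats 1000000 in
set_option maxHeartbeats 4000000 in
theorem stmt12 (d k : ℕ) (K : Type*) [Field K] [IsAlgClosed K] [CharZero K]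
    (W : Fin k → Subgroup (Equiv.Perm (Fin d))) (χ : ∀ m, W m →* Kˣ)
    (I : Fin k → Set (Equiv.Perm (Fin d))) (hI : ∀ m, IsLeftTransversal (W m) (I m))
    (s : ∀ m, Equiv.Perm (Fin d) →* Equiv.Perm (I m))
    (hs : ∀ m (ζ : Equiv.Perm (Fin d)) (i : I m),
      ((s m ζ i : Equiv.Perm (Fin d)))⁻¹ * ζ * i ∈ W m)
    (T : Finset (∀ m, I m))
    (hT : ∀ i : ∀ m, I m, ∃! ω, ω ∈ T ∧ ∃ ζ : Equiv.Perm (Fin d), ∀ m, s m ζ (ω m) = i m) :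
    ch K (fun ζ => ∏ m, indChar K (W m) (χ m) ζ) =
      ∑ ω ∈ T,
        (Nat.card (⨅ m, (W m).map
            (MulAut.conj ((ω m : Equiv.Perm (Fin d)))).toMonoidHom : Subgroup _) : K)⁻¹ •
          ∑ ζ : Equiv.Perm (Fin d),
            if ζ ∈ ⨅ m, (W m).map (MulAut.conj ((ω m : Equiv.Perm (Fin d)))).toMonoidHom then
              (∏ m, (χ m ⟨((s m ζ (ω m) : Equiv.Perm (Fin d)))⁻¹ * ζ * (ω m),
                  hs m ζ (ω m)⟩ : K)) • cycMon K ζ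
            else 0 := by
  classical
  -- membership in the intersection subgroup
  have hmemH : ∀ (ω : ∀ m, I m) (ζ : Equiv.Perm (Fin d)),
      (ζ ∈ ⨅ m, (W m).map (MulAut.conj ((ω m : Equiv.Perm (Fin d)))).toMonoidHom)
        ↔ ∀ m, s m ζ (ω m) = ω m := by
    intro ω ζ
    rw [Subgroup.mem_iInf]
    apply forall_congr'
    intro m
    rw [Subgroup.mem_map, s_eq_iff (W m) (I m) (hI m) (s m) (hs m) ζ (ω m) (ω m)]
    constructor
    · rintro ⟨x, hx, rfl⟩
      simpa [MulAut.conj_apply, mul_assoc] using hx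
    · intro hx
      refine ⟨(ω m : Equiv.Perm (Fin d))⁻¹ * ζ * (ω m), hx, ?_⟩
      show (ω m : Equiv.Perm (Fin d)) * ((ω m : Equiv.Perm (Fin d))⁻¹ * ζ * (ω m))
        * (ω m : Equiv.Perm (Fin d))⁻¹ = ζ
      group
  -- expansion of the product of induced characters
  have hexp : ∀ ζ : Equiv.Perm (Fin d),
      (∏ m, indChar K (W m) (χ m) ζ)
        = ∑ ω : ∀ m, I m,
            if (∀ m, s m ζ (ω m) = ω m) then
              (∏ m, (χ m ⟨((s m ζ (ω m) : Equiv.Perm (Fin d)))⁻¹ * ζ * (ω m),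
                hs m ζ (ω m)⟩ : K))
            else 0 := by
    intro ζ
    rw [Finset.prod_congr rfl fun m _ =>
      indChar_eq_transversal (W m) (I m) (hI m) (s m) (hs m) (χ m) ζ]
    rw [Fintype.prod_sum (fun m (i : I m) => if s m ζ i = i
      then (χ m ⟨((s m ζ i : Equiv.Perm (Fin d)))⁻¹ * ζ * i, hs m ζ i⟩ : K) else 0)]
    exact Finset.sum_congr rfl fun ω _ => prod_ite_all _ _
  -- the left-hand side
  have hLHS : ch K (fun ζ => ∏ m, indChar K (W m) (χ m) ζ)
      = (Nat.card (Equiv.Perm (Fin d)) : K)⁻¹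
          • ∑ ω : ∀ m, I m, Aaux K W χ I s hs ω := by
    rw [ch]
    congr 1
    rw [Finset.sum_congr rfl (fun ζ _ => by rw [hexp ζ, Finset.sum_smul])]
    rw [Finset.sum_comm]
    apply Finset.sum_congr rfl
    intro ω _
    unfold Aaux
    apply Finset.sum_congr rfl
    intro ζ _
    by_cases hch : ∀ m, s m ζ (ω m) = ω m <;> simp [hch]
  -- partitioning the tuples into orbits
  have hsplit : (∑ i : ∀ m, I m, Aaux K W χ I s hs i)
      = ∑ ω ∈ T, ∑ i : ∀ m, I m,
          (if (∃ ζ, ∀ m', s m' ζ (ω m') = i m') then Aaux K W χ I s hs i else 0) := by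
    rw [Finset.sum_comm]
    symm
    apply Finset.sum_congr rfl
    intro i _
    obtain ⟨ω₀, ⟨hT0, hex0⟩, huniq⟩ := hT i
    rw [Finset.sum_eq_single ω₀]
    · rw [if_pos hex0]
    · intro ω hω hne
      rw [if_neg]
      intro hex'
      exact hne (huniq ω ⟨hω, hex'⟩)
    · intro h; exact absurd hT0 h
  have hconstInner : ∀ ω ∈ T,
      (∑ i : ∀ m, I m, (if (∃ ζ, ∀ m', s m' ζ (ω m') = i m')
          then Aaux K W χ I s hs i else 0))
        = (Finset.univ.filter (fun i : ∀ m, I m => ∃ ζ, ∀ m', s m' ζ (ω m') = i m')).card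
            • Aaux K W χ I s hs ω := by
    intro ω _
    have hconst : ∀ i : ∀ m, I m, (∃ ζ, ∀ m', s m' ζ (ω m') = i m')
        → Aaux K W χ I s hs i = Aaux K W χ I s hs ω := by
      rintro i ⟨ζ, hζ⟩
      have : i = fun m => s m ζ (ω m) := funext fun m => (hζ m).symm
      rw [this, Aaux_conj]
    have hterm : ∀ i : ∀ m, I m,
        (if (∃ ζ, ∀ m', s m' ζ (ω m') = i m') then Aaux K W χ I s hs i else 0)
          = (if (∃ ζ, ∀ m', s m' ζ (ω m') = i m') then Aaux K W χ I s hs ω else 0) := by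
      intro i
      by_cases hex : ∃ ζ, ∀ m', s m' ζ (ω m') = i m'
      · rw [if_pos hex, if_pos hex, hconst i hex]
      · rw [if_neg hex, if_neg hex]
    rw [Finset.sum_congr rfl fun i _ => hterm i, ← Finset.sum_filter, Finset.sum_const]
  -- scalar identity
  have hGne : (Nat.card (Equiv.Perm (Fin d)) : K) ≠ 0 :=
    Nat.cast_ne_zero.mpr (Nat.card_pos (α := Equiv.Perm (Fin d))).ne'
  have hscal : ∀ ω ∈ T,
      (Nat.card (Equiv.Perm (Fin d)) : K)⁻¹
          * ((Finset.univ.filter (fun i : ∀ m, I m => ∃ ζ, ∀ m', s m' ζ (ω m') = i m')).card : K)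
        = (Nat.card (⨅ m, (W m).map
            (MulAut.conj ((ω m : Equiv.Perm (Fin d)))).toMonoidHom : Subgroup _) : K)⁻¹ := by
    intro ω _
    have hSne : (Nat.card (⨅ m, (W m).map
        (MulAut.conj ((ω m : Equiv.Perm (Fin d)))).toMonoidHom : Subgroup _) : K) ≠ 0 :=
      Nat.cast_ne_zero.mpr (Nat.card_pos).ne'
    have hHcard : Nat.card (⨅ m, (W m).map
          (MulAut.conj ((ω m : Equiv.Perm (Fin d)))).toMonoidHom : Subgroup _)
        = Nat.card {η : Equiv.Perm (Fin d) // ∀ m, s m η (ω m) = ω m} :=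
      Nat.card_congr (Equiv.subtypeEquivRight fun η => hmemH ω η)
    have hc := orbit_count I s ω
    rw [← hHcard] at hc
    have hc' : ((Finset.univ.filter
          (fun i : ∀ m, I m => ∃ ζ, ∀ m', s m' ζ (ω m') = i m')).card : K)
        * (Nat.card (⨅ m, (W m).map
            (MulAut.conj ((ω m : Equiv.Perm (Fin d)))).toMonoidHom : Subgroup _) : K)
        = (Nat.card (Equiv.Perm (Fin d)) : K) := by
      exact_mod_cast congrArg (Nat.cast : ℕ → K) hc
    have hfne : ((Finset.univ.filter
          (fun i : ∀ m, I m => ∃ ζ, ∀ m', s m' ζ (ω m') = i m')).card : K) ≠ 0 := by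
      intro h
      apply hGne
      rw [← hc', h, zero_mul]
    rw [← hc', mul_inv, mul_right_comm, inv_mul_cancel₀ hfne, one_mul]
  -- put everything together
  rw [hLHS, hsplit, Finset.smul_sum]
  apply Finset.sum_congr rfl
  intro ω hω
  rw [hconstInner ω hω, ← Nat.cast_smul_eq_nsmul K, smul_smul, hscal ω hω]
  congr 1
  unfold Aaux
  exact (Finset.sum_congr rfl fun ζ _ => if_congr (hmemH ω ζ) rfl rfl).symm
end

section
/- If W₁,…,W_k ≤ S_d satisfy C(W₁,…,W_k) = {((1),…,(1))}, i.e., the only k-tuple of elements of W₁×⋯×W_k all sharing the same cycle type is the tuple of identities, then the number of S_d-orbits on I₁×⋯×I_k (equivalently, the number of superpositions of k graphs with automorphism groups W₁,…,W_k) equals (d!)^{k-1} / (|W₁|⋯|W_k|). -/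
open scoped Classical
open MvPolynomial

lemma cyc_congr {d : ℕ} {σ σ' : Equiv.Perm (Fin d)} (h : σ.cycleType = σ'.cycleType) (t : ℕ) :
    cyc σ t = cyc σ' t := by
  unfold cyc
  rw [← Equiv.Perm.sum_cycleType, ← Equiv.Perm.sum_cycleType, h]

lemma fix_iff {d : ℕ} (W : Subgroup (Equiv.Perm (Fin d))) (I : Set (Equiv.Perm (Fin d)))
    (hI : IsLeftTransversal W I) (s : Equiv.Perm (Fin d) →* Equiv.Perm I)
    (hs : ∀ (ζ : Equiv.Perm (Fin d)) (i : I), ((s ζ i : Equiv.Perm (Fin d)))⁻¹ * ζ * i ∈ W)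
    (ζ : Equiv.Perm (Fin d)) (i : I) :
    s ζ i = i ↔ (i : Equiv.Perm (Fin d))⁻¹ * ζ * i ∈ W := by
  constructor
  · intro h; have := hs ζ i; rwa [h] at this
  · intro h
    have ha := hs ζ i
    have hji : ((s ζ i : Equiv.Perm (Fin d)))⁻¹ * (i : Equiv.Perm (Fin d)) ∈ W := by
      have h2 := mul_mem ha (inv_mem h)
      have he : ((s ζ i : Equiv.Perm (Fin d)))⁻¹ * ζ * i * ((i : Equiv.Perm (Fin d))⁻¹ * ζ * i)⁻¹
          = ((s ζ i : Equiv.Perm (Fin d)))⁻¹ * i := by group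
      rwa [he] at h2
    obtain ⟨x, hx, hxu⟩ := hI (i : Equiv.Perm (Fin d))
    have h1 : i = x := hxu i
      (by show (i : Equiv.Perm (Fin d))⁻¹ * i ∈ W; rw [inv_mul_cancel]; exact W.one_mem)
    have h2 : s ζ i = x := hxu (s ζ i) hji
    exact h2.trans h1.symm

lemma card_conj_eq {d : ℕ} (W : Subgroup (Equiv.Perm (Fin d))) (I : Set (Equiv.Perm (Fin d)))
    (hI : IsLeftTransversal W I) (s : Equiv.Perm (Fin d) →* Equiv.Perm I)
    (hs : ∀ (ζ : Equiv.Perm (Fin d)) (i : I), ((s ζ i : Equiv.Perm (Fin d)))⁻¹ * ζ * i ∈ W)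
    (ζ : Equiv.Perm (Fin d)) :
    Nat.card {g : Equiv.Perm (Fin d) // g⁻¹ * ζ * g ∈ W} =
      Nat.card {i : I // s ζ i = i} * Nat.card W := by
  rw [← Nat.card_prod]
  let τ : {g : Equiv.Perm (Fin d) // g⁻¹ * ζ * g ∈ W} → I := fun g => (hI g.1).choose
  have hτ : ∀ g, ((τ g : Equiv.Perm (Fin d)))⁻¹ * g.1 ∈ W := fun g => (hI g.1).choose_spec.1
  have hτu : ∀ (g) (j : I), (j : Equiv.Perm (Fin d))⁻¹ * g.1 ∈ W → j = τ g :=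
    fun g => (hI g.1).choose_spec.2
  have hfix : ∀ g, s ζ (τ g) = τ g := by
    intro g
    rw [fix_iff W I hI s hs]
    have he : (τ g : Equiv.Perm (Fin d))⁻¹ * ζ * (τ g) =
        ((τ g : Equiv.Perm (Fin d))⁻¹ * g.1) * (g.1⁻¹ * ζ * g.1) *
          ((τ g : Equiv.Perm (Fin d))⁻¹ * g.1)⁻¹ := by group
    rw [he]
    exact mul_mem (mul_mem (hτ g) g.2) (inv_mem (hτ g))
  have hinv : ∀ p : {i : I // s ζ i = i} × W,
      ((p.1.1 : Equiv.Perm (Fin d)) * (p.2 : Equiv.Perm (Fin d)))⁻¹ * ζ *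
        ((p.1.1 : Equiv.Perm (Fin d)) * (p.2 : Equiv.Perm (Fin d))) ∈ W := by
    intro p
    have h1 : (p.1.1 : Equiv.Perm (Fin d))⁻¹ * ζ * p.1.1 ∈ W :=
      (fix_iff W I hI s hs ζ p.1.1).1 p.1.2
    have he : ((p.1.1 : Equiv.Perm (Fin d)) * (p.2 : Equiv.Perm (Fin d)))⁻¹ * ζ *
          ((p.1.1 : Equiv.Perm (Fin d)) * (p.2 : Equiv.Perm (Fin d))) =
        ((p.2 : Equiv.Perm (Fin d)))⁻¹ *
          ((p.1.1 : Equiv.Perm (Fin d))⁻¹ * ζ * p.1.1) * p.2 := by group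
    rw [he]
    exact mul_mem (mul_mem (inv_mem p.2.2) h1) p.2.2
  apply Nat.card_congr
  refine
    { toFun := fun g => (⟨τ g, hfix g⟩, ⟨(τ g : Equiv.Perm (Fin d))⁻¹ * g.1, hτ g⟩)
      invFun := fun p => ⟨(p.1.1 : Equiv.Perm (Fin d)) * (p.2 : Equiv.Perm (Fin d)), hinv p⟩
      left_inv := ?_
      right_inv := ?_ }
  · intro g
    apply Subtype.ext
    show (τ g : Equiv.Perm (Fin d)) * ((τ g : Equiv.Perm (Fin d))⁻¹ * g.1) = g.1
    group
  · intro p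
    have hmem : (p.1.1 : Equiv.Perm (Fin d))⁻¹ *
        ((p.1.1 : Equiv.Perm (Fin d)) * (p.2 : Equiv.Perm (Fin d))) ∈ W := by
      rw [inv_mul_cancel_left]; exact p.2.2
    have h1 : p.1.1 = τ ⟨(p.1.1 : Equiv.Perm (Fin d)) * (p.2 : Equiv.Perm (Fin d)), hinv p⟩ :=
      hτu _ p.1.1 hmem
    refine Prod.ext (Subtype.ext (Subtype.ext ?_)) (Subtype.ext ?_)
    · exact congrArg _ h1.symm
    · show (τ ⟨(p.1.1 : Equiv.Perm (Fin d)) * (p.2 : Equiv.Perm (Fin d)), hinv p⟩ :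
          Equiv.Perm (Fin d))⁻¹ *
        ((p.1.1 : Equiv.Perm (Fin d)) * (p.2 : Equiv.Perm (Fin d))) = (p.2 : Equiv.Perm (Fin d))
      rw [← h1, inv_mul_cancel_left]

lemma card_mem_eq_sum {G : Type*} [Group G] [Fintype G] (W : Subgroup G) (ζ : G) :
    Nat.card {g : G // g⁻¹ * ζ * g ∈ W} =
      ∑ σ : W, Nat.card {g : G // g⁻¹ * ζ * g = (σ : G)} := by
  have he : {g : G // g⁻¹ * ζ * g ∈ W} ≃ Σ σ : W, {g : G // g⁻¹ * ζ * g = (σ : G)} :=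
    { toFun := fun g => ⟨⟨g.1⁻¹ * ζ * g.1, g.2⟩, ⟨g.1, rfl⟩⟩
      invFun := fun p => ⟨p.2.1, by rw [p.2.2]; exact p.1.2⟩
      left_inv := fun g => rfl
      right_inv := by
        rintro ⟨⟨σ, hσ⟩, ⟨g, hg⟩⟩
        simp only at hg
        subst hg
        rfl }
  rw [Nat.card_congr he, Nat.card_eq_fintype_card, Fintype.card_sigma]
  exact Finset.sum_congr rfl (fun σ _ => (Nat.card_eq_fintype_card).symm)

set_option maxHeartbeats 1000000 in
set_option synthInstance.maxHeartbeats 1000000 in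
/-- if the only tuple in `W₁×⋯×W_k` whose components all have the same
cycle type is the tuple of identities, then the number of `S_d`-orbits on `I₁×⋯×I_k`
(the number of superpositions) equals `(d!)^{k-1}/(|W₁|⋯|W_k|)`. -/
theorem stmt16 (d k : ℕ) (W : Fin k → Subgroup (Equiv.Perm (Fin d)))
    (I : Fin k → Set (Equiv.Perm (Fin d))) (hI : ∀ m, IsLeftTransversal (W m) (I m))
    (s : ∀ m, Equiv.Perm (Fin d) →* Equiv.Perm (I m))
    (hs : ∀ m (ζ : Equiv.Perm (Fin d)) (i : I m),
      ((s m ζ i : Equiv.Perm (Fin d)))⁻¹ * ζ * i ∈ W m)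
    (hC : ∀ σ : ∀ m, W m,
      (∀ t : ℕ, ∀ m m' : Fin k,
        cyc ((σ m : Equiv.Perm (Fin d))) t = cyc ((σ m' : Equiv.Perm (Fin d))) t) →
      ∀ m, σ m = 1) :
    Nat.card (Quot (fun i j : ∀ m, I m =>
        ∃ ζ : Equiv.Perm (Fin d), ∀ m, s m ζ (i m) = j m)) *
      ∏ m, Nat.card (W m) = (d.factorial) ^ (k - 1) := by
  classical
  rcases Nat.eq_zero_or_pos k with hk0 | hk
  · subst hk0
    have hu : ∀ a b : Quot (fun i j : ∀ m : Fin 0, I m =>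
        ∃ ζ : Equiv.Perm (Fin d), ∀ m, s m ζ (i m) = j m), a = b := by
      rintro ⟨a⟩ ⟨b⟩
      exact Quot.sound ⟨1, fun m => m.elim0⟩
    haveI : Unique (Quot (fun i j : ∀ m : Fin 0, I m =>
        ∃ ζ : Equiv.Perm (Fin d), ∀ m, s m ζ (i m) = j m)) :=
      ⟨⟨Quot.mk _ (fun m => m.elim0)⟩, fun a => hu a _⟩
    simp [Nat.card_unique]
  · -- main case
    letI act : MulAction (Equiv.Perm (Fin d)) (∀ m, I m) :=
      { smul := fun ζ i m => s m ζ (i m)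
        one_smul := fun i => funext fun m => by
          show s m 1 (i m) = i m
          rw [map_one]; rfl
        mul_smul := fun ζ ζ' i => funext fun m => by
          show s m (ζ * ζ') (i m) = s m ζ (s m ζ' (i m))
          rw [map_mul]; rfl }
    have hrel : (fun i j : ∀ m, I m => ∃ ζ : Equiv.Perm (Fin d), ∀ m, s m ζ (i m) = j m)
        = (MulAction.orbitRel (Equiv.Perm (Fin d)) (∀ m, I m)).r := by
      funext i j
      apply propext
      rw [show (MulAction.orbitRel (Equiv.Perm (Fin d)) (∀ m, I m)).r i j ↔
          i ∈ MulAction.orbit (Equiv.Perm (Fin d)) j from Iff.rfl]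
      rw [MulAction.mem_orbit_iff]
      constructor
      · rintro ⟨ζ, h⟩
        refine ⟨ζ⁻¹, ?_⟩
        have hj : ζ • i = j := funext h
        rw [← hj, inv_smul_smul]
      · rintro ⟨ζ, h⟩
        refine ⟨ζ⁻¹, fun m => ?_⟩
        have hij : ζ⁻¹ • i = j := by rw [← h, inv_smul_smul]
        exact congrFun hij m
    rw [hrel]
    -- Burnside
    have hb := MulAction.sum_card_fixedBy_eq_card_orbits_mul_card_group
      (Equiv.Perm (Fin d)) (∀ m, I m)
    simp only [← Nat.card_eq_fintype_card] at hb
    -- fixed points on product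
    have hfixprod : ∀ ζ : Equiv.Perm (Fin d),
        Nat.card (MulAction.fixedBy (∀ m, I m) ζ) =
          ∏ m, Nat.card {i : I m // s m ζ i = i} := by
      intro ζ
      rw [← Nat.card_pi]
      apply Nat.card_congr
      refine Equiv.trans (Equiv.subtypeEquivRight (q := fun x : ∀ m, I m => ∀ m, s m ζ (x m) = x m)
        (fun x => ?_)) (Equiv.subtypePiEquivPi (p := fun m (b : I m) => s m ζ b = b))
      constructor
      · intro h m; exact congrFun h m
      · intro h; funext m; exact h m
    -- key count
    have key : (∑ ζ : Equiv.Perm (Fin d),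
        ∏ m, Nat.card {g : Equiv.Perm (Fin d) // g⁻¹ * ζ * g ∈ W m})
        = (d.factorial) ^ k := by
      have h1 : ∀ ζ : Equiv.Perm (Fin d),
          ∏ m, Nat.card {g : Equiv.Perm (Fin d) // g⁻¹ * ζ * g ∈ W m}
          = ∑ σ : ∀ m, W m, ∏ m,
              Nat.card {g : Equiv.Perm (Fin d) // g⁻¹ * ζ * g = ((σ m : Equiv.Perm (Fin d)))} := by
        intro ζ
        rw [Finset.prod_congr rfl (fun m _ => card_mem_eq_sum (W m) ζ)]
        exact Fintype.prod_sum (fun m (σ : W m) =>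
          Nat.card {g : Equiv.Perm (Fin d) // g⁻¹ * ζ * g = ((σ : Equiv.Perm (Fin d)))})
      rw [Finset.sum_congr rfl (fun ζ _ => h1 ζ), Finset.sum_comm]
      rw [Finset.sum_eq_single_of_mem (1 : ∀ m, W m) (Finset.mem_univ _) ?side1]
      · rw [Finset.sum_eq_single_of_mem (1 : Equiv.Perm (Fin d)) (Finset.mem_univ _) ?side2]
        · have hn1 : ∀ m : Fin k,
              Nat.card {g : Equiv.Perm (Fin d) //
                g⁻¹ * (1 : Equiv.Perm (Fin d)) * g = (((1 : ∀ m, W m) m : Equiv.Perm (Fin d)))}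
                = d.factorial := by
            intro m
            have hall : ∀ g : Equiv.Perm (Fin d),
                g⁻¹ * (1 : Equiv.Perm (Fin d)) * g
                  = (((1 : ∀ m, W m) m : Equiv.Perm (Fin d))) := by
              intro g; simp
            rw [Nat.card_congr (Equiv.subtypeUnivEquiv hall), Nat.card_eq_fintype_card]
            simp [Fintype.card_perm]
          rw [Finset.prod_congr rfl (fun m _ => hn1 m)]
          simp
        case side2 =>
          intro ζ _ hζ
          apply Finset.prod_eq_zero (Finset.mem_univ (⟨0, hk⟩ : Fin k))
          have : IsEmpty {g : Equiv.Perm (Fin d) //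
              g⁻¹ * ζ * g = (((1 : ∀ m, W m) ⟨0, hk⟩ : Equiv.Perm (Fin d)))} := by
            constructor
            rintro ⟨g, hg⟩
            apply hζ
            have hz : ζ = g * (g⁻¹ * ζ * g) * g⁻¹ := by group
            rw [hz, hg]
            simp
          exact Nat.card_of_isEmpty
      case side1 =>
        intro σ _ hσ
        apply Finset.sum_eq_zero
        intro ζ _
        by_contra hne
        have hall : ∀ m, ((σ m : Equiv.Perm (Fin d))).cycleType = ζ.cycleType := by
          intro m
          have hne0 : Nat.card {g : Equiv.Perm (Fin d) //
              g⁻¹ * ζ * g = ((σ m : Equiv.Perm (Fin d)))} ≠ 0 := by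
            intro h0
            exact hne (Finset.prod_eq_zero (Finset.mem_univ m) h0)
          have hnonempty : Nonempty {g : Equiv.Perm (Fin d) //
              g⁻¹ * ζ * g = ((σ m : Equiv.Perm (Fin d)))} := by
            by_contra hne2
            exact hne0 (@Nat.card_of_isEmpty _ (not_nonempty_iff.1 hne2))
          obtain ⟨g, hg⟩ := hnonempty
          rw [← hg]
          have := Equiv.Perm.cycleType_conj (σ := ζ) (τ := g⁻¹)
          simpa using this
        have h1 := hC σ (fun t m m' => cyc_congr ((hall m).trans (hall m').symm) t)
        exact hσ (funext h1)
    -- assemble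
    have hG : Nat.card (Equiv.Perm (Fin d)) = d.factorial := by
      rw [Nat.card_eq_fintype_card]; simp [Fintype.card_perm]
    have hassemble :
        Nat.card (Quotient (MulAction.orbitRel (Equiv.Perm (Fin d)) (∀ m, I m))) *
          (∏ m, Nat.card (W m)) * d.factorial = (d.factorial) ^ k := by
      calc Nat.card (Quotient (MulAction.orbitRel (Equiv.Perm (Fin d)) (∀ m, I m))) *
          (∏ m, Nat.card (W m)) * d.factorial
          = (Nat.card (Quotient (MulAction.orbitRel (Equiv.Perm (Fin d)) (∀ m, I m))) *
              Nat.card (Equiv.Perm (Fin d))) * ∏ m, Nat.card (W m) := by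
            rw [hG]; ring
        _ = (∑ ζ : Equiv.Perm (Fin d), Nat.card (MulAction.fixedBy (∀ m, I m) ζ)) *
              ∏ m, Nat.card (W m) := by rw [hb]
        _ = ∑ ζ : Equiv.Perm (Fin d), (∏ m, Nat.card {i : I m // s m ζ i = i}) *
              ∏ m, Nat.card (W m) := by
            rw [Finset.sum_mul]
            exact Finset.sum_congr rfl (fun ζ _ => by rw [hfixprod ζ])
        _ = ∑ ζ : Equiv.Perm (Fin d),
              ∏ m, Nat.card {g : Equiv.Perm (Fin d) // g⁻¹ * ζ * g ∈ W m} := by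
            refine Finset.sum_congr rfl (fun ζ _ => ?_)
            rw [← Finset.prod_mul_distrib]
            exact (Finset.prod_congr rfl
              (fun m _ => (card_conj_eq (W m) (I m) (hI m) (s m) (hs m) ζ).symm))
        _ = (d.factorial) ^ k := key
    have hkpow : (d.factorial) ^ k = (d.factorial) ^ (k - 1) * d.factorial := by
      rw [← pow_succ]
      congr 1
      omega
    rw [hkpow] at hassemble
    exact Nat.eq_of_mul_eq_mul_right (Nat.factorial_pos d) hassemble
end

section
/- Suppose W₁ ≤ S_d is cyclic and ρ : W₁ → Kˣ is an injective one-dimensional character. Then N(Z(ρ;p₁,…,p_d) ∗ Z(1_{W₂};p₁,…,p_d) ∗ ⋯ ∗ Z(1_{W_k};p₁,…,p_d)) equals the number of S_d-orbits on I₁×⋯×I_k whose stabilizer ω₁W₁ω₁⁻¹ ∩ ⋯ ∩ ω_kW_kω_k⁻¹ is trivial. -/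
open scoped Classical
open MvPolynomial

/-!
Evaluating at `p_s = 1` turns `ch` into the average `|S_d|⁻¹ Σ_ζ`. Expanding each induced
character over its transversal and multiplying out gives `Σ_ω Σ_{ζ ∈ Stab ω} ρ(ω₁⁻¹ ζ ω₁)`,
where `Stab ω = ⋂ ω_m W_m ω_m⁻¹` is the stabilizer of `ω` for the diagonal action. On `Stab ω`
the map `ζ ↦ ρ(ω₁⁻¹ ζ ω₁)` is an injective character, so it sums to `1` if `Stab ω` is trivial
and to `0` otherwise. The tuples with trivial stabilizer form the free orbits, each of size
`|S_d|`, so there are `|S_d|` times as many of them as free orbit representatives in `T`.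
-/

noncomputable def extendByZero {G K : Type*} [Group G] [Field K] {W : Subgroup G}
    (χ : W →* Kˣ) (x : G) : K :=
  if h : x ∈ W then (χ ⟨x, h⟩ : K) else 0

section Characters

variable {G K : Type*} [Group G] [Field K]

theorem extendByZero_conj {W : Subgroup G} (χ : W →* Kˣ) {w : G} (hw : w ∈ W) (x : G) :
    extendByZero χ (w⁻¹ * x * w) = extendByZero χ x := by
  have hmem : w⁻¹ * x * w ∈ W ↔ x ∈ W := by
    rw [mul_assoc, W.mul_mem_cancel_left (inv_mem hw), W.mul_mem_cancel_right hw]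
  unfold extendByZero
  by_cases hx : x ∈ W
  · rw [dif_pos (hmem.2 hx), dif_pos hx]
    have : (⟨w⁻¹ * x * w, hmem.2 hx⟩ : W) = ⟨w, hw⟩⁻¹ * ⟨x, hx⟩ * ⟨w, hw⟩ := rfl
    rw [this, map_mul, map_mul, map_inv, mul_comm, ← mul_assoc, mul_inv_cancel, one_mul]
  · rw [dif_neg (mt hmem.1 hx), dif_neg hx]

theorem extendByZero_one_apply {W : Subgroup G} (x : G) :
    extendByZero (1 : W →* Kˣ) x = if x ∈ W then 1 else 0 := by
  unfold extendByZero; split_ifs <;> simp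

theorem sum_extendByZero_conj_eq_sum_transversal [Fintype G] [CharZero K] {W : Subgroup G}
    (χ : W →* Kˣ) {I : Set G} (hI : IsLeftTransversal W I) (ζ : G) :
    (Nat.card W : K)⁻¹ * ∑ g : G, extendByZero χ (g⁻¹ * ζ * g) =
      ∑ i : I, extendByZero χ ((i : G)⁻¹ * ζ * i) := by
  have hbij : Function.Bijective fun p : I × W => (p.1 : G) * p.2 :=
    Subgroup.isComplement_iff_existsUnique_inv_mul_mem.2 hI
  rw [← Equiv.sum_comp (Equiv.ofBijective _ hbij), Fintype.sum_prod_type]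
  have hconj : ∀ (i : I) (w : W), extendByZero χ (((i : G) * w)⁻¹ * ζ * (i * w)) =
      extendByZero χ ((i : G)⁻¹ * ζ * i) := fun i w => by
    rw [← extendByZero_conj χ w.2 ((i : G)⁻¹ * ζ * i)]; congr 1; group
  have hW : (Nat.card W : K) ≠ 0 := Nat.cast_ne_zero.2 Nat.card_pos.ne'
  simp only [Equiv.ofBijective_apply, hconj, Finset.sum_const, Finset.card_univ, nsmul_eq_mul,
    ← Finset.mul_sum, Nat.card_eq_fintype_card] at hW ⊢
  rw [← mul_assoc, inv_mul_cancel₀ hW, one_mul]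

theorem sum_coe_eq_ite_eq_bot_of_injective [Fintype G] {H : Subgroup G} (ψ : H →* Kˣ)
    (hψ : Function.Injective ψ) : ∑ h : H, (ψ h : K) = if H = ⊥ then 1 else 0 := by
  have hψ1 : ψ = 1 ↔ H = ⊥ := by
    refine ⟨fun h => (Subgroup.eq_bot_iff_forall H).2 fun x hx => ?_, fun hH => ?_⟩
    · exact congrArg Subtype.val (hψ (show ψ ⟨x, hx⟩ = ψ 1 by rw [h, map_one]; rfl))
    · subst hH
      ext h
      rw [Subsingleton.elim h 1, map_one]; rfl
  have hcoe : (Units.coeHom K).comp ψ = 1 ↔ ψ = 1 :=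
    ⟨fun h => MonoidHom.ext fun x => Units.ext (DFunLike.congr_fun h x), fun h => by simp [h]⟩
  have := sum_hom_units ((Units.coeHom K).comp ψ)
  simp only [MonoidHom.comp_apply, Units.coeHom_apply, hcoe, hψ1] at this
  rw [this]
  split_ifs with hH
  · subst hH; simp
  · exact Nat.cast_zero

theorem sum_ite_mem_extendByZero_conj [Fintype G] {W H : Subgroup G} (χ : W →* Kˣ)
    (hχ : Function.Injective χ) (g : G) (hH : H ≤ W.map (MulAut.conj g).toMonoidHom) :
    ∑ ζ : G, (if ζ ∈ H then extendByZero χ (g⁻¹ * ζ * g) else 0) =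
      if H = ⊥ then 1 else 0 := by
  have hle : H.map (MulAut.conj g).symm.toMonoidHom ≤ W := by
    rintro _ ⟨x, hx, rfl⟩
    exact Subgroup.mem_map_equiv.1 (hH hx)
  let ψ : H →* Kˣ := χ.comp ((Subgroup.inclusion hle).comp
    ((MulAut.conj g).symm.subgroupMap H).toMonoidHom)
  have hψ : Function.Injective ψ :=
    hχ.comp ((Subgroup.inclusion_injective hle).comp (MulEquiv.injective _))
  rw [← sum_coe_eq_ite_eq_bot_of_injective ψ hψ, ← Finset.sum_filter,
    Finset.sum_subtype (p := (· ∈ H)) _ (fun x => by simp)]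
  refine Finset.sum_congr rfl fun h _ => ?_
  rw [extendByZero, dif_pos (hle ⟨h, h.2, MulAut.conj_symm_apply g h⟩)]
  rfl

theorem prod_extendByZero_conj {ι : Type*} [Fintype ι] {W : ι → Subgroup G}
    (χ : ∀ m, W m →* Kˣ) {m₀ : ι} (htriv : ∀ m, m ≠ m₀ → χ m = 1) (ω : ι → G) (ζ : G) :
    ∏ m, extendByZero (χ m) ((ω m)⁻¹ * ζ * ω m) =
      if ζ ∈ ⨅ m, (W m).map (MulAut.conj (ω m)).toMonoidHom
      then extendByZero (χ m₀) ((ω m₀)⁻¹ * ζ * ω m₀) else 0 := by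
  have hmem : ζ ∈ (⨅ m, (W m).map (MulAut.conj (ω m)).toMonoidHom) ↔
      ∀ m, (ω m)⁻¹ * ζ * ω m ∈ W m := by
    simp only [Subgroup.mem_iInf, Subgroup.mem_map_equiv, MulAut.conj_symm_apply]
  have hother : ∀ m ∈ Finset.univ.erase m₀, extendByZero (χ m) ((ω m)⁻¹ * ζ * ω m) =
      if (ω m)⁻¹ * ζ * ω m ∈ W m then 1 else 0 := fun m hm => by
    rw [htriv m (Finset.ne_of_mem_erase hm), extendByZero_one_apply]
  rw [← Finset.mul_prod_erase _ _ (Finset.mem_univ m₀), Finset.prod_congr rfl hother, hmem]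
  split_ifs with hall
  · rw [Finset.prod_eq_one fun m _ => if_pos (hall m), mul_one]
  · obtain ⟨m, hm⟩ := not_forall.1 hall
    rcases eq_or_ne m m₀ with rfl | hne
    · rw [extendByZero, dif_neg hm, zero_mul]
    · rw [Finset.prod_eq_zero (Finset.mem_erase.2 ⟨hne, Finset.mem_univ m⟩) (if_neg hm), mul_zero]

end Characters

section Actions

variable {G : Type*} [Group G]

theorem stabilizer_eq_map_conj_of_isLeftTransversal {W : Subgroup G} {I : Set G}
    (hI : IsLeftTransversal W I) [MulAction G I]
    (hs : ∀ (ζ : G) (i : I), ((ζ • i : I) : G)⁻¹ * ζ * i ∈ W) (i : I) :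
    MulAction.stabilizer G i = W.map (MulAut.conj (i : G)).toMonoidHom := by
  ext ζ
  rw [MulAction.mem_stabilizer_iff, Subgroup.mem_map_equiv, MulAut.conj_symm_apply]
  refine ⟨fun h => by simpa only [h] using hs ζ i, fun h => ?_⟩
  have hcoset : ∀ j : I, (j : G)⁻¹ * (ζ * i) ∈ W ↔ (j : G)⁻¹ * ζ * i ∈ W := by
    simp only [mul_assoc, implies_true]
  exact (hI (ζ * i)).unique ((hcoset _).2 (hs ζ i)) ((hcoset i).2 h)

theorem MulAction.stabilizer_pi {ι : Type*} {X : ι → Type*} [∀ m, MulAction G (X m)]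
    (x : ∀ m, X m) : stabilizer G x = ⨅ m, stabilizer G (x m) := by
  ext ζ
  simp only [mem_stabilizer_iff, Subgroup.mem_iInf, funext_iff, Pi.smul_apply]

theorem card_filter_stabilizer_eq_bot [Fintype G] {X : Type*} [MulAction G X] [Fintype X]
    (T : Finset X) (hT : ∀ x : X, ∃! t, t ∈ T ∧ ∃ g : G, g • t = x) :
    (Finset.univ.filter fun x : X => MulAction.stabilizer G x = ⊥).card =
      (T.filter fun t => MulAction.stabilizer G t = ⊥).card * Fintype.card G := by
  have hconj : ∀ (g : G) (x : X), MulAction.stabilizer G (g • x) = ⊥ ↔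
      MulAction.stabilizer G x = ⊥ := fun g x => by
    rw [MulAction.stabilizer_smul_eq_stabilizer_map_conj,
      Subgroup.map_eq_bot_iff_of_injective _ (MulEquiv.injective _)]
  rw [← Finset.card_univ (α := G), ← Finset.card_product, eq_comm]
  refine Finset.card_bij (fun p _ => p.2 • p.1) (fun p hp => ?_) (fun p hp q hq hpq => ?_)
    (fun x hx => ?_)
  · simp only [Finset.mem_product, Finset.mem_filter, Finset.mem_univ, true_and] at hp ⊢
    exact (hconj _ _).2 hp.1.2
  · simp only [Finset.mem_product, Finset.mem_filter] at hp hq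
    have hrep : p.1 = q.1 := (hT (p.2 • p.1)).unique ⟨hp.1.1, p.2, rfl⟩ ⟨hq.1.1, q.2, hpq.symm⟩
    have hstab : q.2⁻¹ * p.2 ∈ MulAction.stabilizer G p.1 := by
      rw [MulAction.mem_stabilizer_iff, mul_smul, inv_smul_eq_iff, hpq, hrep]
    rw [hp.1.2, Subgroup.mem_bot, inv_mul_eq_one] at hstab
    exact Prod.ext hrep hstab.symm
  · obtain ⟨t, ⟨ht, g, rfl⟩, -⟩ := hT x
    simp only [Finset.mem_filter, Finset.mem_univ, true_and, hconj] at hx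
    exact ⟨(t, g), by simp [ht, hx], rfl⟩

end Actions

theorem eval_one_ch {d : ℕ} (K : Type*) [Field K] (u : Equiv.Perm (Fin d) → K) :
    MvPolynomial.eval (fun _ => (1 : K)) (ch K u) =
      (Nat.card (Equiv.Perm (Fin d)) : K)⁻¹ * ∑ ζ, u ζ := by
  simp [ch, cycMon, smul_eq_C_mul, Finset.mul_sum]

theorem indChar_eq_sum_transversal {d : ℕ} (K : Type*) [Field K] [CharZero K]
    {W : Subgroup (Equiv.Perm (Fin d))} (χ : W →* Kˣ) {I : Set (Equiv.Perm (Fin d))}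
    (hI : IsLeftTransversal W I) (ζ : Equiv.Perm (Fin d)) :
    indChar K W χ ζ = ∑ i : I, extendByZero χ ((i : Equiv.Perm (Fin d))⁻¹ * ζ * i) :=
  sum_extendByZero_conj_eq_sum_transversal χ hI ζ

theorem stmt17_general (d k : ℕ) (hk : 0 < k) (K : Type*) [Field K] [CharZero K]
    (W : Fin k → Subgroup (Equiv.Perm (Fin d))) (χ : ∀ m, W m →* Kˣ)
    (hinj : Function.Injective (χ ⟨0, hk⟩))
    (htriv : ∀ m : Fin k, m ≠ ⟨0, hk⟩ → χ m = 1)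
    (I : Fin k → Set (Equiv.Perm (Fin d))) (hI : ∀ m, IsLeftTransversal (W m) (I m))
    (s : ∀ m, Equiv.Perm (Fin d) →* Equiv.Perm (I m))
    (hs : ∀ m (ζ : Equiv.Perm (Fin d)) (i : I m),
      ((s m ζ i : Equiv.Perm (Fin d)))⁻¹ * ζ * i ∈ W m)
    (T : Finset (∀ m, I m))
    (hT : ∀ i : ∀ m, I m, ∃! ω, ω ∈ T ∧ ∃ ζ : Equiv.Perm (Fin d), ∀ m, s m ζ (ω m) = i m) :
    MvPolynomial.eval (fun _ => (1 : K))
        (ch K (fun ζ => ∏ m, indChar K (W m) (χ m) ζ)) =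
      ((T.filter (fun ω =>
        (⨅ m, (W m).map (MulAut.conj ((ω m : Equiv.Perm (Fin d)))).toMonoidHom) = ⊥)).card
        : K) := by
  -- `S_d` acts on each `I m` through `s m`, hence diagonally on `∀ m, I m`.
  let _ : ∀ m, MulAction (Equiv.Perm (Fin d)) (I m) := fun m => MulAction.compHom _ (s m)
  have hstab (ω : ∀ m, I m) : MulAction.stabilizer (Equiv.Perm (Fin d)) ω =
      ⨅ m, (W m).map (MulAut.conj (ω m : Equiv.Perm (Fin d))).toMonoidHom := by
    simp only [MulAction.stabilizer_pi, stabilizer_eq_map_conj_of_isLeftTransversal (hI _) (hs _)]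
  have hfree (ω : ∀ m, I m) :
      ∑ ζ, ∏ m, extendByZero (χ m) ((ω m : Equiv.Perm (Fin d))⁻¹ * ζ * ω m) =
        if MulAction.stabilizer (Equiv.Perm (Fin d)) ω = ⊥ then 1 else 0 := by
    simp only [prod_extendByZero_conj χ htriv, hstab]
    exact sum_ite_mem_extendByZero_conj _ hinj _ (iInf_le _ _)
  have hcount := card_filter_stabilizer_eq_bot T fun x => by simp only [funext_iff]; exact hT x
  simp only [hstab] at hcount
  calc
    _ = (Nat.card (Equiv.Perm (Fin d)) : K)⁻¹ * ∑ ζ, ∑ ω : ∀ m, I m,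
        ∏ m, extendByZero (χ m) ((ω m : Equiv.Perm (Fin d))⁻¹ * ζ * ω m) := by
      simp only [eval_one_ch, indChar_eq_sum_transversal K _ (hI _), Finset.prod_univ_sum,
        Fintype.piFinset_univ]
    _ = _ := by
      rw [Finset.sum_comm]
      simp only [hfree, hstab, Finset.sum_boole, hcount, Nat.card_eq_fintype_card]
      have hG : (Fintype.card (Equiv.Perm (Fin d)) : K) ≠ 0 :=
        Nat.cast_ne_zero.2 Fintype.card_ne_zero
      rw [Nat.cast_mul, mul_comm, mul_assoc, mul_inv_cancel₀ hG, mul_one]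

/-- if `W₁` is cyclic and `ρ : W₁ → Kˣ` is an injective one-dimensional
character, then `N(Z(ρ)∗Z(1_{W₂})∗⋯∗Z(1_{W_k}))` equals the number of `S_d`-orbits on
`I₁×⋯×I_k` whose stabilizer `ω₁W₁ω₁⁻¹ ∩ ⋯ ∩ ω_kW_kω_k⁻¹` is trivial. -/
theorem stmt17 (d k : ℕ) (hk : 0 < k) (K : Type*) [Field K] [IsAlgClosed K] [CharZero K]
    (W : Fin k → Subgroup (Equiv.Perm (Fin d))) (χ : ∀ m, W m →* Kˣ)
    (hcyc : IsCyclic (W ⟨0, hk⟩))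
    (hinj : Function.Injective (χ ⟨0, hk⟩))
    (htriv : ∀ m : Fin k, m ≠ ⟨0, hk⟩ → χ m = 1)
    (I : Fin k → Set (Equiv.Perm (Fin d))) (hI : ∀ m, IsLeftTransversal (W m) (I m))
    (s : ∀ m, Equiv.Perm (Fin d) →* Equiv.Perm (I m))
    (hs : ∀ m (ζ : Equiv.Perm (Fin d)) (i : I m),
      ((s m ζ i : Equiv.Perm (Fin d)))⁻¹ * ζ * i ∈ W m)
    (T : Finset (∀ m, I m))
    (hT : ∀ i : ∀ m, I m, ∃! ω, ω ∈ T ∧ ∃ ζ : Equiv.Perm (Fin d), ∀ m, s m ζ (ω m) = i m) :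
    MvPolynomial.eval (fun _ => (1 : K))
        (ch K (fun ζ => ∏ m, indChar K (W m) (χ m) ζ)) =
      ((T.filter (fun ω =>
        (⨅ m, (W m).map (MulAut.conj ((ω m : Equiv.Perm (Fin d)))).toMonoidHom) = ⊥)).card
        : K) :=
  stmt17_general d k hk K W χ hinj htriv I hI s hs T hT
end
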